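/- arXiv:1811.12149 — 2 statements merged into one kernel-verified Lean document; each statement's English description precedes it below -/
import Mathlib

section
/- Fix p < 0, a compact set S ⊆ ℝ^d, ε ∈ (0,2], and a compact set K ⊆ ℝ^d with x^T z ≥ -1 + 1/n for all x ∈ K, z ∈ S, and |x| ≤ κ for x ∈ K. Define I(z,x) = [p^{-1}((1 + x^T z)^p - 1) - x^T z]/(|z|^{2-ε} ∧ 1) for z ≠ 0 and I(0,x) = 0. Then I is continuous on S × K, and I(z,·) is Lipschitz in x uniformly in z ∈ S, with Lipschitz constant depending only on n, κ, p, ε. -/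
/-!
Write `g(t) = p⁻¹((1 + t)^p - 1) - t`. Then `g 0 = g' 0 = 0` and on `1 + t ≥ a > 0` we have
`|g''(t)| = |p - 1| (1 + t)^(p-2) ≤ |p - 1| a^(p-2) =: C` because `p ≤ 2`. Two applications of
the mean value inequality give `|g y - g y'| ≤ C max(|y|, |y'|) |y - y'|`, so with `y = ⟪x, z⟫`
the numerator of `I` moves by at most `C κ ‖z‖² ‖x - x'‖`. Dividing by `‖z‖^(2-ε) ∧ 1` leaves the
factor `‖z‖^ε ∨ ‖z‖²`, which is bounded on the compact `S` (the Lipschitz bound) and tends to `0`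
with `z` (continuity at `z = 0`, comparing with `x' = 0`).
-/

open scoped RealInnerProductSpace
open Classical

noncomputable def powerGap (p t : ℝ) : ℝ := p⁻¹ * ((1 + t) ^ p - 1) - t

section PowerGap

variable {p a t y y' : ℝ}

@[simp]
lemma powerGap_zero (p : ℝ) : powerGap p 0 = 0 := by
  simp [powerGap]

lemma hasDerivAt_powerGap (hp : p ≠ 0) (ht : 0 < 1 + t) :
    HasDerivAt (powerGap p) ((1 + t) ^ (p - 1) - 1) t := by
  have h : HasDerivAt (fun s => p⁻¹ * ((1 + s) ^ p - 1) - s)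
      (p⁻¹ * (1 * p * (1 + t) ^ (p - 1)) - 1) t :=
    (((((hasDerivAt_id' t).const_add 1).rpow_const (Or.inl ht.ne')).sub_const 1).const_mul
      p⁻¹).sub (hasDerivAt_id' t)
  exact h.congr_deriv (by field_simp)

lemma abs_one_add_rpow_sub_one_le (hp : p ≤ 2) (ha : 0 < a) (ha1 : a ≤ 1) (ht : a ≤ 1 + t) :
    |(1 + t) ^ (p - 1) - 1| ≤ |p - 1| * a ^ (p - 2) * |t| := by
  have hpos : ∀ s ∈ Set.Ici (a - 1), 0 < 1 + s := fun s hs => by linarith [Set.mem_Ici.1 hs]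
  have hderiv : ∀ s ∈ Set.Ici (a - 1), HasDerivWithinAt (fun s => (1 + s) ^ (p - 1))
      ((p - 1) * (1 + s) ^ (p - 2)) (Set.Ici (a - 1)) s := by
    intro s hs
    have h : HasDerivAt (fun s => (1 + s) ^ (p - 1)) (1 * (p - 1) * (1 + s) ^ (p - 1 - 1)) s :=
      ((hasDerivAt_id' s).const_add 1).rpow_const (Or.inl (hpos s hs).ne')
    rw [one_mul, show p - 1 - 1 = p - 2 by ring] at h
    exact h.hasDerivWithinAt
  have hbound : ∀ s ∈ Set.Ici (a - 1), ‖(p - 1) * (1 + s) ^ (p - 2)‖ ≤ |p - 1| * a ^ (p - 2) := by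
    intro s hs
    rw [Real.norm_eq_abs, abs_mul, abs_of_pos (Real.rpow_pos_of_pos (hpos s hs) _)]
    exact mul_le_mul_of_nonneg_left
      (Real.rpow_le_rpow_of_nonpos ha (by linarith [Set.mem_Ici.1 hs]) (by linarith)) (abs_nonneg _)
  simpa [Real.norm_eq_abs] using (convex_Ici (a - 1)).norm_image_sub_le_of_norm_hasDerivWithin_le
    hderiv hbound (x := 0) (by simpa using ha1) (by simpa [add_comm] using ht)

lemma abs_powerGap_sub_le (hp : p ≠ 0) (hp2 : p ≤ 2) (ha : 0 < a) (ha1 : a ≤ 1)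
    (hy : a ≤ 1 + y) (hy' : a ≤ 1 + y') :
    |powerGap p y - powerGap p y'| ≤ |p - 1| * a ^ (p - 2) * max |y| |y'| * |y - y'| := by
  set s := Set.Ici (a - 1) ∩ Metric.closedBall 0 (max |y| |y'|)
  have hs : Convex ℝ s := (convex_Ici _).inter (convex_closedBall _ _)
  have hderiv : ∀ u ∈ s, HasDerivWithinAt (powerGap p) ((1 + u) ^ (p - 1) - 1) s u :=
    fun u hu => (hasDerivAt_powerGap hp (by linarith [Set.mem_Ici.1 hu.1])).hasDerivWithinAt
  have hbound : ∀ u ∈ s, ‖(1 + u) ^ (p - 1) - 1‖ ≤ |p - 1| * a ^ (p - 2) * max |y| |y'| := by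
    intro u hu
    refine (abs_one_add_rpow_sub_one_le hp2 ha ha1 (by linarith [Set.mem_Ici.1 hu.1])).trans ?_
    gcongr
    simpa using hu.2
  have hys : y ∈ s := ⟨by simp only [Set.mem_Ici]; linarith, by simp⟩
  have hys' : y' ∈ s := ⟨by simp only [Set.mem_Ici]; linarith, by simp⟩
  simpa [Real.norm_eq_abs] using hs.norm_image_sub_le_of_norm_hasDerivWithin_le hderiv hbound hys' hys

end PowerGap

lemma sq_eq_max_rpow_mul_min_rpow {r : ℝ} (hr : 0 < r) (ε : ℝ) :
    r ^ 2 = max (r ^ ε) (r ^ 2) * min (r ^ (2 - ε)) 1 := by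
  have h : r ^ ε * r ^ (2 - ε) = r ^ 2 := by
    rw [← Real.rpow_add hr, add_sub_cancel, Real.rpow_two]
  have hε : 0 < r ^ ε := by positivity
  rcases le_total (r ^ (2 - ε)) 1 with h1 | h1
  · rw [min_eq_left h1, max_eq_left (by nlinarith)]
    exact h.symm
  · rw [min_eq_right h1, max_eq_right (by nlinarith), mul_one]

section JumpIntegrand

variable {E : Type*} [NormedAddCommGroup E] [InnerProductSpace ℝ E] {p a ε κ : ℝ}

lemma abs_powerGap_inner_sub_le (hp : p ≠ 0) (hp2 : p ≤ 2) (ha : 0 < a) (ha1 : a ≤ 1)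
    {z x x' : E} (hx : a ≤ 1 + ⟪x, z⟫) (hx' : a ≤ 1 + ⟪x', z⟫) (hxκ : ‖x‖ ≤ κ)
    (hx'κ : ‖x'‖ ≤ κ) :
    |powerGap p ⟪x, z⟫ - powerGap p ⟪x', z⟫| ≤ |p - 1| * a ^ (p - 2) * κ * ‖z‖ ^ 2 * ‖x - x'‖ := by
  have hκ : 0 ≤ κ := (norm_nonneg x).trans hxκ
  have hinner : ∀ w : E, ‖w‖ ≤ κ → |⟪w, z⟫| ≤ κ * ‖z‖ := fun w hw =>
    (abs_real_inner_le_norm w z).trans (by gcongr)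
  have hmax : max |⟪x, z⟫| |⟪x', z⟫| ≤ κ * ‖z‖ := max_le (hinner x hxκ) (hinner x' hx'κ)
  have hdiff : |⟪x, z⟫ - ⟪x', z⟫| ≤ ‖x - x'‖ * ‖z‖ := by
    rw [← inner_sub_left]
    exact abs_real_inner_le_norm _ _
  calc |powerGap p ⟪x, z⟫ - powerGap p ⟪x', z⟫|
      ≤ |p - 1| * a ^ (p - 2) * max |⟪x, z⟫| |⟪x', z⟫| * |⟪x, z⟫ - ⟪x', z⟫| :=
        abs_powerGap_sub_le hp hp2 ha ha1 hx hx'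
    _ ≤ |p - 1| * a ^ (p - 2) * (κ * ‖z‖) * (‖x - x'‖ * ‖z‖) := by gcongr
    _ = |p - 1| * a ^ (p - 2) * κ * ‖z‖ ^ 2 * ‖x - x'‖ := by ring

variable (p ε) in
noncomputable def jumpIntegrand (q : E × E) : ℝ :=
  if q.1 = 0 then 0 else powerGap p ⟪q.2, q.1⟫ / min (‖q.1‖ ^ (2 - ε)) 1

lemma abs_jumpIntegrand_sub_le (hp : p ≠ 0) (hp2 : p ≤ 2) (ha : 0 < a) (ha1 : a ≤ 1)
    {z x x' : E} (hx : a ≤ 1 + ⟪x, z⟫) (hx' : a ≤ 1 + ⟪x', z⟫) (hxκ : ‖x‖ ≤ κ)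
    (hx'κ : ‖x'‖ ≤ κ) :
    |jumpIntegrand p ε (z, x) - jumpIntegrand p ε (z, x')| ≤
      |p - 1| * a ^ (p - 2) * κ * max (‖z‖ ^ ε) (‖z‖ ^ 2) * ‖x - x'‖ := by
  have hκ : 0 ≤ κ := (norm_nonneg x).trans hxκ
  by_cases hz : z = 0
  · simp only [jumpIntegrand, if_pos hz, sub_self, abs_zero]
    exact mul_nonneg (mul_nonneg (by positivity) (le_max_of_le_right (by positivity)))
      (norm_nonneg _)
  have hm : 0 < min (‖z‖ ^ (2 - ε)) 1 := lt_min (by positivity) one_pos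
  simp only [jumpIntegrand, if_neg hz]
  rw [← sub_div, abs_div, abs_of_pos hm, div_le_iff₀ hm]
  have hsq := sq_eq_max_rpow_mul_min_rpow (norm_pos_iff.2 hz) ε
  calc |powerGap p ⟪x, z⟫ - powerGap p ⟪x', z⟫|
      ≤ |p - 1| * a ^ (p - 2) * κ * ‖z‖ ^ 2 * ‖x - x'‖ :=
        abs_powerGap_inner_sub_le hp hp2 ha ha1 hx hx' hxκ hx'κ
    _ = _ := by linear_combination (|p - 1| * a ^ (p - 2) * κ * ‖x - x'‖) * hsq

lemma abs_jumpIntegrand_le (hp : p ≠ 0) (hp2 : p ≤ 2) (ha : 0 < a) (ha1 : a ≤ 1)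
    {z x : E} (hx : a ≤ 1 + ⟪x, z⟫) (hxκ : ‖x‖ ≤ κ) :
    |jumpIntegrand p ε (z, x)| ≤ |p - 1| * a ^ (p - 2) * κ ^ 2 * max (‖z‖ ^ ε) (‖z‖ ^ 2) := by
  have hκ : 0 ≤ κ := (norm_nonneg x).trans hxκ
  have h := abs_jumpIntegrand_sub_le (ε := ε) (x' := 0) hp hp2 ha ha1 hx (by simpa using ha1) hxκ
    (by simpa using hκ)
  have h0 : jumpIntegrand p ε (z, (0 : E)) = 0 := by simp [jumpIntegrand]
  rw [h0, sub_zero, sub_zero] at h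
  calc |jumpIntegrand p ε (z, x)|
      ≤ |p - 1| * a ^ (p - 2) * κ * max (‖z‖ ^ ε) (‖z‖ ^ 2) * ‖x‖ := h
    _ ≤ |p - 1| * a ^ (p - 2) * κ * max (‖z‖ ^ ε) (‖z‖ ^ 2) * κ := by gcongr
    _ = |p - 1| * a ^ (p - 2) * κ ^ 2 * max (‖z‖ ^ ε) (‖z‖ ^ 2) := by ring

lemma continuousAt_jumpIntegrand {z x : E} (hz : z ≠ 0) (hx : 0 < 1 + ⟪x, z⟫) :
    ContinuousAt (jumpIntegrand p ε) (z, x) := by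
  have hformula : ContinuousAt
      (fun q : E × E => powerGap p ⟪q.2, q.1⟫ / min (‖q.1‖ ^ (2 - ε)) 1) (z, x) := by
    have hinner : ContinuousAt (fun q : E × E => ⟪q.2, q.1⟫) (z, x) := by fun_prop
    refine ContinuousAt.div ?_ ?_ (lt_min (by positivity) one_pos).ne'
    · exact (continuousAt_const.mul (((continuousAt_const.add hinner).rpow_const
        (Or.inl hx.ne')).sub continuousAt_const)).sub hinner
    · exact (continuous_fst.norm.continuousAt.rpow_const
        (Or.inl (norm_ne_zero_iff.2 hz))).min continuousAt_const
  refine hformula.congr ?_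
  filter_upwards [(isOpen_ne_fun continuous_fst continuous_const).mem_nhds hz] with q hq
  exact (if_neg hq).symm

lemma continuousOn_jumpIntegrand (hp : p ≠ 0) (hp2 : p ≤ 2) (hε : 0 < ε) (ha : 0 < a)
    (ha1 : a ≤ 1) {S K : Set E} (hsep : ∀ x ∈ K, ∀ z ∈ S, a ≤ 1 + ⟪x, z⟫)
    (hκ : ∀ x ∈ K, ‖x‖ ≤ κ) :
    ContinuousOn (jumpIntegrand p ε) (S ×ˢ K) := by
  rintro ⟨z, x⟩ ⟨hz, hx⟩
  by_cases hz0 : z = 0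
  swap
  · exact (continuousAt_jumpIntegrand hz0 (by linarith [hsep x hx z hz])).continuousWithinAt
  subst hz0
  have hbound : Continuous fun q : E × E =>
      |p - 1| * a ^ (p - 2) * κ ^ 2 * max (‖q.1‖ ^ ε) (‖q.1‖ ^ 2) := by
    fun_prop (disch := exact hε.le)
  have hlim := (hbound.tendsto ((0 : E), x)).mono_left (nhdsWithin_le_nhds (s := S ×ˢ K))
  simp only [norm_zero, Real.zero_rpow hε.ne', zero_pow two_ne_zero, max_self, mul_zero] at hlim
  rw [ContinuousWithinAt, show jumpIntegrand p ε ((0 : E), x) = 0 by simp [jumpIntegrand]]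
  refine squeeze_zero_norm' ?_ hlim
  filter_upwards [self_mem_nhdsWithin] with q hq
  exact abs_jumpIntegrand_le hp hp2 ha ha1 (hsep q.2 hq.2 q.1 hq.1) (hκ q.2 hq.2)

end JumpIntegrand

theorem stmt_17_general (d : ℕ) (p ε κ : ℝ) (hp : p < 0) (hε : ε ∈ Set.Ioc (0:ℝ) 2)
    (n : ℕ) (hn : 0 < n)
    (S K : Set (EuclideanSpace ℝ (Fin d)))
    (hScomp : IsCompact S)
    (hsep : ∀ x ∈ K, ∀ z ∈ S, -1 + 1 / (n : ℝ) ≤ ⟪x, z⟫)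
    (hκ : ∀ x ∈ K, ‖x‖ ≤ κ)
    (I : EuclideanSpace ℝ (Fin d) × EuclideanSpace ℝ (Fin d) → ℝ)
    (hI : ∀ z x, I (z, x) =
      if z = 0 then 0
      else (p⁻¹ * ((1 + ⟪x, z⟫) ^ p - 1) - ⟪x, z⟫) / (min (‖z‖ ^ (2 - ε)) 1)) :
    ContinuousOn I (S ×ˢ K) ∧
    ∃ L : ℝ, 0 ≤ L ∧ ∀ z ∈ S, ∀ x ∈ K, ∀ x' ∈ K,
      |I (z, x) - I (z, x')| ≤ L * ‖x - x'‖ := by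
  obtain rfl : I = jumpIntegrand p ε := funext fun ⟨z, x⟩ => by
    rw [hI, jumpIntegrand]
    congr
  have hp2 : p ≤ 2 := by linarith
  have ha : (0 : ℝ) < 1 / n := by positivity
  have ha1 : 1 / (n : ℝ) ≤ 1 := div_le_one_of_le₀ (by exact_mod_cast hn) (by positivity)
  have hsep' : ∀ x ∈ K, ∀ z ∈ S, 1 / (n : ℝ) ≤ 1 + ⟪x, z⟫ := fun x hx z hz => by
    linarith [hsep x hx z hz]
  have hκ' : ∀ x ∈ K, ‖x‖ ≤ |κ| := fun x hx => (hκ x hx).trans (le_abs_self κ)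
  refine ⟨continuousOn_jumpIntegrand hp.ne hp2 hε.1 ha ha1 hsep' hκ, ?_⟩
  obtain ⟨R, hR⟩ := hScomp.isBounded.exists_norm_le
  refine ⟨|p - 1| * (1 / n) ^ (p - 2) * |κ| * max (R ^ ε) (R ^ 2),
    mul_nonneg (by positivity) (le_max_of_le_right (by positivity)), fun z hz x hx x' hx' => ?_⟩
  have hzR := hR z hz
  have hε0 := hε.1.le
  calc |jumpIntegrand p ε (z, x) - jumpIntegrand p ε (z, x')|
      ≤ |p - 1| * (1 / n) ^ (p - 2) * |κ| * max (‖z‖ ^ ε) (‖z‖ ^ 2) * ‖x - x'‖ :=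
        abs_jumpIntegrand_sub_le hp.ne hp2 ha ha1 (hsep' x hx z hz) (hsep' x' hx' z hz)
          (hκ' x hx) (hκ' x' hx')
    _ ≤ |p - 1| * (1 / n) ^ (p - 2) * |κ| * max (R ^ ε) (R ^ 2) * ‖x - x'‖ := by gcongr

theorem stmt_17 (d : ℕ) (p ε κ : ℝ) (hp : p < 0) (hε : ε ∈ Set.Ioc (0:ℝ) 2)
    (n : ℕ) (hn : 0 < n)
    (S K : Set (EuclideanSpace ℝ (Fin d)))
    (hScomp : IsCompact S) (hKcomp : IsCompact K)
    (hsep : ∀ x ∈ K, ∀ z ∈ S, -1 + 1 / (n : ℝ) ≤ ⟪x, z⟫)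
    (hκ : ∀ x ∈ K, ‖x‖ ≤ κ)
    (I : EuclideanSpace ℝ (Fin d) × EuclideanSpace ℝ (Fin d) → ℝ)
    (hI : ∀ z x, I (z, x) =
      if z = 0 then 0
      else (p⁻¹ * ((1 + ⟪x, z⟫) ^ p - 1) - ⟪x, z⟫) / (min (‖z‖ ^ (2 - ε)) 1)) :
    ContinuousOn I (S ×ˢ K) ∧
    ∃ L : ℝ, 0 ≤ L ∧ ∀ z ∈ S, ∀ x ∈ K, ∀ x' ∈ K,
      |I (z, x) - I (z, x')| ≤ L * ‖x - x'‖ :=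
  stmt_17_general d p ε κ hp hε n hn S K hScomp hsep hκ I hI
end

section
/- Let p < 0, T > 0, and g : [0,T] → ℝ bounded measurable with m := inf_t g_t and M := sup_t g_t. Let c*_t = [exp(∫_t^T (p g_u/(1-p)) du) + ∫_t^T exp(∫_t^s (p g_u/(1-p)) du) ds]^{-1}. Then for every t ∈ [0,T], ((-p m/(1-p)) ∨ 0) ∧ 1 ≤ c*_t ≤ (-p M/(1-p)) ∨ 1. -/
/-!
With `f = p g / (1 - p)`, the reciprocal `1 / c*` is the solution of the linear equation
`y' = -f y - 1`, `y T = 1`, and its explicit formula is monotone in `f`. On `[t, T]` the kernel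
lies between the constants `-b` and `-a`, with `a = -p m / (1 - p)` and `b = -p M / (1 - p)`.
For a constant kernel `-r` the solution is `r⁻¹ + e^{-r (T - t)} (1 - r⁻¹)`, which lies between
`1` and `r⁻¹`; comparing with the constants `-min a 1` and `-max b 1` gives the two bounds.
-/

open MeasureTheory intervalIntegral Set

/-- The reciprocal of the consumption ratio: `1 / riccatiDenom f t T` solves the Riccati
equation `c' = f c + c²`, `c T = 1`. -/
noncomputable def riccatiDenom (f : ℝ → ℝ) (t T : ℝ) : ℝ :=
  Real.exp (∫ u in t..T, f u) + ∫ s in t..T, Real.exp (∫ u in t..s, f u)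

theorem riccatiDenom_pos {f : ℝ → ℝ} {t T : ℝ} (htT : t ≤ T) : 0 < riccatiDenom f t T :=
  add_pos_of_pos_of_nonneg (Real.exp_pos _)
    (integral_nonneg htT fun _ _ => (Real.exp_pos _).le)

theorem intervalIntegrable_exp_primitive {f : ℝ → ℝ} {t T : ℝ}
    (hf : IntervalIntegrable f volume t T) :
    IntervalIntegrable (fun s => Real.exp (∫ u in t..s, f u)) volume t T :=
  (Real.continuous_exp.comp_continuousOn
    (continuousOn_primitive_interval' hf left_mem_uIcc)).intervalIntegrable

theorem riccatiDenom_mono {f h : ℝ → ℝ} {t T : ℝ} (htT : t ≤ T)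
    (hf : IntervalIntegrable f volume t T) (hh : IntervalIntegrable h volume t T)
    (hfh : ∀ u ∈ Icc t T, f u ≤ h u) : riccatiDenom f t T ≤ riccatiDenom h t T := by
  have hprim : ∀ s ∈ Icc t T, ∫ u in t..s, f u ≤ ∫ u in t..s, h u := fun s hs =>
    integral_mono_on hs.1 (hf.mono_set (uIcc_subset_uIcc_left (Icc_subset_uIcc hs)))
      (hh.mono_set (uIcc_subset_uIcc_left (Icc_subset_uIcc hs)))
      fun u hu => hfh u ⟨hu.1, hu.2.trans hs.2⟩
  unfold riccatiDenom
  gcongr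
  · exact hprim T ⟨htT, le_rfl⟩
  · exact integral_mono_on htT (intervalIntegrable_exp_primitive hf)
      (intervalIntegrable_exp_primitive hh) fun s hs => Real.exp_le_exp.2 (hprim s hs)

theorem riccatiDenom_const_sub_inv {r : ℝ} (hr : r ≠ 0) (t T : ℝ) :
    riccatiDenom (fun _ => -r) t T - r⁻¹ = Real.exp (-r * (T - t)) * (1 - r⁻¹) := by
  have hint : ∫ s in t..T, Real.exp (∫ _ in t..s, -r) = r⁻¹ * (1 - Real.exp (-r * (T - t))) := by
    simp only [intervalIntegral.integral_const, smul_eq_mul]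
    have := integral_comp_sub_mul (a := t) (b := T) Real.exp hr (r * t)
    simp only [integral_exp, smul_eq_mul, sub_self, Real.exp_zero] at this
    convert this using 3 <;> ring_nf
  rw [riccatiDenom, hint]
  simp only [intervalIntegral.integral_const, smul_eq_mul]
  ring_nf

theorem riccatiDenom_le_inv {f : ℝ → ℝ} {t T r : ℝ} (htT : t ≤ T)
    (hf : IntervalIntegrable f volume t T) (hr₀ : 0 < r) (hr₁ : r ≤ 1)
    (hfr : ∀ u ∈ Icc t T, f u ≤ -r) : riccatiDenom f t T ≤ r⁻¹ := by
  have hconst : riccatiDenom (fun _ => -r) t T ≤ r⁻¹ := by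
    rw [← sub_nonpos, riccatiDenom_const_sub_inv hr₀.ne']
    exact mul_nonpos_of_nonneg_of_nonpos (Real.exp_pos _).le
      (sub_nonpos.2 ((one_le_inv₀ hr₀).2 hr₁))
  exact (riccatiDenom_mono htT hf intervalIntegrable_const hfr).trans hconst

theorem inv_le_riccatiDenom {f : ℝ → ℝ} {t T r : ℝ} (htT : t ≤ T)
    (hf : IntervalIntegrable f volume t T) (hr : 1 ≤ r)
    (hfr : ∀ u ∈ Icc t T, -r ≤ f u) : r⁻¹ ≤ riccatiDenom f t T := by
  have hconst : r⁻¹ ≤ riccatiDenom (fun _ => -r) t T := by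
    rw [← sub_nonneg, riccatiDenom_const_sub_inv (one_pos.trans_le hr).ne']
    exact mul_nonneg (Real.exp_pos _).le (sub_nonneg.2 (inv_le_one_of_one_le₀ hr))
  exact hconst.trans (riccatiDenom_mono htT intervalIntegrable_const hf hfr)

theorem min_le_inv_riccatiDenom {f : ℝ → ℝ} {t T a : ℝ} (htT : t ≤ T)
    (hf : IntervalIntegrable f volume t T) (hfa : ∀ u ∈ Icc t T, f u ≤ -a) :
    min (max a 0) 1 ≤ (riccatiDenom f t T)⁻¹ := by
  rcases le_or_gt a 0 with ha | ha
  · rw [max_eq_right ha]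
    exact (min_le_left _ _).trans (inv_pos.2 (riccatiDenom_pos htT)).le
  · have hr := lt_min ha one_pos
    rw [max_eq_left ha.le, le_inv_comm₀ hr (riccatiDenom_pos htT)]
    exact riccatiDenom_le_inv htT hf hr (min_le_right _ _) fun u hu =>
      (hfa u hu).trans (neg_le_neg (min_le_left _ _))

theorem inv_riccatiDenom_le_max {f : ℝ → ℝ} {t T b : ℝ} (htT : t ≤ T)
    (hf : IntervalIntegrable f volume t T) (hfb : ∀ u ∈ Icc t T, -b ≤ f u) :
    (riccatiDenom f t T)⁻¹ ≤ max b 1 := by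
  rw [inv_le_comm₀ (riccatiDenom_pos htT) (one_pos.trans_le (le_max_right _ _))]
  exact inv_le_riccatiDenom htT hf (le_max_right _ _) fun u hu =>
    (neg_le_neg (le_max_left _ _)).trans (hfb u hu)

theorem stmt_18_general (p T : ℝ) (hp : p < 0)
    (g : ℝ → ℝ) (hg : Measurable g) (Cg : ℝ) (hbd : ∀ t, |g t| ≤ Cg)
    (m M : ℝ) (hm : m = sInf (g '' Set.Icc 0 T)) (hM : M = sSup (g '' Set.Icc 0 T))
    (c : ℝ → ℝ)
    (hc : ∀ t, c t =
      (Real.exp (∫ u in t..T, p * g u / (1 - p)) +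
        ∫ s in t..T, Real.exp (∫ u in t..s, p * g u / (1 - p)))⁻¹) :
    ∀ t ∈ Set.Icc (0:ℝ) T,
      min (max (-p * m / (1 - p)) 0) 1 ≤ c t ∧ c t ≤ max (-p * M / (1 - p)) 1 := by
  intro t ⟨ht₀, htT⟩
  have hf : IntervalIntegrable (fun u => p * g u / (1 - p)) volume t T :=
    ((intervalIntegrable_iff.2 <| Measure.integrableOn_of_bounded measure_Ioc_lt_top.ne
      hg.aestronglyMeasurable (.of_forall hbd)).const_mul p).div_const _
  have hbdd : Bornology.IsBounded (g '' Icc 0 T) :=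
    isBounded_iff_forall_norm_le.2 ⟨Cg, by rintro _ ⟨x, -, rfl⟩; exact hbd x⟩
  have hsub : Icc t T ⊆ Icc 0 T := Icc_subset_Icc_left ht₀
  have h1p : 0 ≤ 1 - p := by linarith
  rw [hc t]
  refine ⟨min_le_inv_riccatiDenom htT hf fun u hu => ?_, inv_riccatiDenom_le_max htT hf
    fun u hu => ?_⟩ <;> simp only [neg_mul, neg_div, neg_neg]
  · have : m ≤ g u := hm ▸ csInf_le hbdd.bddBelow (mem_image_of_mem g (hsub hu))
    exact div_le_div_of_nonneg_right (mul_le_mul_of_nonpos_left this hp.le) h1p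
  · have : g u ≤ M := hM ▸ le_csSup hbdd.bddAbove (mem_image_of_mem g (hsub hu))
    exact div_le_div_of_nonneg_right (mul_le_mul_of_nonpos_left this hp.le) h1p

theorem stmt_18 (p T : ℝ) (hp : p < 0) (hT : 0 < T)
    (g : ℝ → ℝ) (hg : Measurable g) (Cg : ℝ) (hbd : ∀ t, |g t| ≤ Cg)
    (m M : ℝ) (hm : m = sInf (g '' Set.Icc 0 T)) (hM : M = sSup (g '' Set.Icc 0 T))
    (c : ℝ → ℝ)
    (hc : ∀ t, c t =
      (Real.exp (∫ u in t..T, p * g u / (1 - p)) +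
        ∫ s in t..T, Real.exp (∫ u in t..s, p * g u / (1 - p)))⁻¹) :
    ∀ t ∈ Set.Icc (0:ℝ) T,
      min (max (-p * m / (1 - p)) 0) 1 ≤ c t ∧ c t ≤ max (-p * M / (1 - p)) 1 :=
  stmt_18_general p T hp g hg Cg hbd m M hm hM c hc
end
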